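/- arXiv:1807.01053 — 4 statements merged into one kernel-verified Lean document; each statement's English description precedes it below -/
import Mathlib

section
/- Kleisli composition of H₀M is ω-continuous in the trajectory argument: for every f : X → H₀M Y and every ω-chain (d₀,e₀) ⊑ (d₁,e₁) ⊑ … in H₀M X, one has f^†(⊔ᵢ (dᵢ,eᵢ)) = ⊔ᵢ f^†(dᵢ,eᵢ). -/
/-!
Call a trajectory *terminating at `x`* if its duration `d` is finite and its evolution takes the
value `x` at `d`; `f^†` behaves differently exactly on terminating trajectories. Along a chain,
termination is inherited upwards with the same duration and value, so there are two cases. If some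
element terminates at `x` with duration `d`, so does the join, every element has duration `≤ d`,
and by flatness a non-terminating element is undefined from `d` on; hence below `d` both sides are
the pointwise `bind`, and from `d` on both are `(f x).2 (t - d)`. If no element terminates, then
by flatness neither does the join, and both sides are the pointwise `bind`, which commutes with
the join of a chain.
-/

open scoped ENNReal NNReal
open Classical

universe u v w

/-- Raw trajectories: a duration in `ℝ≥0∞` and a partial evolution `ℝ≥0 → Option X`. -/
abbrev Traj (X : Type u) := ℝ≥0∞ × (ℝ≥0 → Option X)

/-- The flattening condition: if the duration is finite, the evolution is constant
from the duration onwards.  Membership in `H₀M X` means exactly `Flat`. -/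
def Flat {X : Type u} (p : Traj X) : Prop :=
  ∀ t : ℝ≥0, p.1 ≤ (t : ℝ≥0∞) → p.2 t = p.2 p.1.toNNReal

/-- The unit of `H₀M`. -/
def eta {X : Type u} (x : X) : Traj X := (0, fun _ => some x)

/-- The Kleisli lifting `f^†` of the monad `H₀M`. -/
noncomputable def kl {X : Type u} {Y : Type v} (f : X → Traj Y) (p : Traj X) : Traj Y :=
  if p.1 = ⊤ then (p.1, fun t => (p.2 t).bind fun x' => (f x').2 0)
  else
    match p.2 p.1.toNNReal with
    | none => (p.1, fun t => (p.2 t).bind fun x' => (f x').2 0)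
    | some x =>
        (p.1 + (f x).1,
          fun t =>
            if (t : ℝ≥0∞) < p.1 then (p.2 t).bind fun x' => (f x').2 0
            else (f x).2 (t - p.1.toNNReal))

/-- Membership in `H₊ X ⊆ H₀M X`: the evolution is not everywhere `none`, and it is
defined at every time instant strictly below the duration. -/
def memHp {X : Type u} (p : Traj X) : Prop :=
  p.2 ≠ (fun _ => none) ∧ ∀ t : ℝ≥0, (t : ℝ≥0∞) < p.1 → p.2 t ≠ none

/-- Membership in `H X ⊆ H₀M X`: either the evolution is total, or the duration is `∞`
and the domain of the evolution is downward closed. -/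
def memH {X : Type u} (p : Traj X) : Prop :=
  (∀ t, p.2 t ≠ none) ∨
    (p.1 = ⊤ ∧ ∀ s t : ℝ≥0, s ≤ t → p.2 t ≠ none → p.2 s ≠ none)

/-- The approximation order `⊑` on `H₀M X`. -/
def TrajLE {X : Type u} (p q : Traj X) : Prop :=
  p.1 ≤ q.1 ∧ (∀ t, p.2 t ≠ none → q.2 t = p.2 t) ∧
    (p.1 ≠ ⊤ → p.2 p.1.toNNReal ≠ none → p.1 = q.1)

/-- Join of an ω-chain in `H₀M X`: the duration is the supremum of the durations, and
the evolution at `t` is the common value `(c i).2 t` whenever it is `≠ none` for some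
`i`, and `none` otherwise. -/
noncomputable def chainJoin {X : Type u} (c : ℕ → Traj X) : Traj X :=
  (⨆ i, (c i).1,
    fun t => if h : ∃ i, (c i).2 t ≠ none then (c h.choose).2 t else none)

/-- `d⋆ = sup { s < d ∣ e is defined on [0, s) }`. -/
noncomputable def dstar {X : Type u} (p : Traj X) : ℝ≥0∞ :=
  sSup {s : ℝ≥0∞ | s < p.1 ∧ ∀ t : ℝ≥0, (t : ℝ≥0∞) < s → p.2 t ≠ none}

/-- The retraction `ρ : H₀M X → H₀M X` onto `H X`. -/
noncomputable def rho {X : Type u} (p : Traj X) : Traj X :=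
  ((if ∀ t, p.2 t ≠ none then p.1 else ⊤),
    fun t =>
      if (t : ℝ≥0∞) ≤ dstar p then p.2 t
      else if ∀ t', p.2 t' ≠ none then p.2 (dstar p).toNNReal else none)

/-- The iterates `f⁽ⁿ⁾` of `f : X → H₀M (Y ⊕ X)`. -/
noncomputable def iter {X Y : Type u} (f : X → Traj (Y ⊕ X)) : ℕ → X → Traj Y
  | 0, _ => (0, fun _ => none)
  | n + 1, x => kl (Sum.elim eta (iter f n)) (f x)

/-- The least-fixpoint iteration `f^‡ x = ⊔ₙ f⁽ⁿ⁾ x`. -/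
noncomputable def iterStar {X Y : Type u} (f : X → Traj (Y ⊕ X)) (x : X) : Traj Y :=
  chainJoin fun n => iter f n x

/-- `f : X → H₊ (A ⊕ B)` is progressive in `B` (guarded in the second summand). -/
def Prog {X : Type u} {A B : Type v} (f : X → Traj (A ⊕ B)) : Prop :=
  ∀ x, ∃ a : A, (f x).2 0 = some (Sum.inl a)

def Terminates {X : Type u} (p : Traj X) (x : X) : Prop :=
  p.1 ≠ ⊤ ∧ p.2 p.1.toNNReal = some x

section Kleisli

variable {X : Type u} {Y : Type v} (f : X → Traj Y) {p : Traj X}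

lemma kl_of_terminates {x : X} (h : Terminates p x) :
    kl f p = (p.1 + (f x).1, fun (t : ℝ≥0) =>
      if (t : ℝ≥0∞) < p.1 then (p.2 t).bind fun x' => (f x').2 0
      else (f x).2 (t - p.1.toNNReal)) := by
  unfold kl
  rw [if_neg h.1, h.2]

lemma kl_of_forall_not_terminates (h : ∀ x, ¬Terminates p x) :
    kl f p = (p.1, fun t => (p.2 t).bind fun x' => (f x').2 0) := by
  unfold kl
  split_ifs with htop
  · rfl
  · cases hx : p.2 p.1.toNNReal with
    | none => rfl
    | some x => exact absurd ⟨htop, hx⟩ (h x)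

lemma kl_fst_of_terminates {x : X} (h : Terminates p x) : (kl f p).1 = p.1 + (f x).1 := by
  rw [kl_of_terminates f h]

lemma kl_snd_of_terminates_of_lt {x : X} (h : Terminates p x) {t : ℝ≥0} (ht : (t : ℝ≥0∞) < p.1) :
    (kl f p).2 t = (p.2 t).bind fun x' => (f x').2 0 := by
  rw [kl_of_terminates f h]
  exact if_pos ht

lemma kl_snd_of_terminates_of_le {x : X} (h : Terminates p x) {t : ℝ≥0} (ht : p.1 ≤ t) :
    (kl f p).2 t = (f x).2 (t - p.1.toNNReal) := by
  rw [kl_of_terminates f h]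
  exact if_neg (not_lt.mpr ht)

lemma kl_fst_of_forall_not_terminates (h : ∀ x, ¬Terminates p x) : (kl f p).1 = p.1 := by
  rw [kl_of_forall_not_terminates f h]

lemma kl_snd_of_forall_not_terminates (h : ∀ x, ¬Terminates p x) (t : ℝ≥0) :
    (kl f p).2 t = (p.2 t).bind fun x' => (f x').2 0 := by
  rw [kl_of_forall_not_terminates f h]

end Kleisli

lemma Flat.snd_eq_none_of_le {X : Type u} {p : Traj X} (hp : Flat p)
    (h : ∀ x, ¬Terminates p x) {t : ℝ≥0} (ht : p.1 ≤ t) : p.2 t = none := by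
  rw [hp t ht]
  cases hx : p.2 p.1.toNNReal with
  | none => rfl
  | some x => exact absurd ⟨ne_top_of_le_ne_top ENNReal.coe_ne_top ht, hx⟩ (h x)

namespace TrajLE

variable {X : Type u} {p q r : Traj X}

protected lemma refl (p : Traj X) : TrajLE p p :=
  ⟨le_rfl, fun _ _ => rfl, fun _ _ => rfl⟩

protected lemma trans (hpq : TrajLE p q) (hqr : TrajLE q r) : TrajLE p r := by
  obtain ⟨hd₁, he₁, hs₁⟩ := hpq
  obtain ⟨hd₂, he₂, hs₂⟩ := hqr
  refine ⟨hd₁.trans hd₂, fun t ht => ?_, fun htop hne => ?_⟩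
  · rw [he₂ t (by rwa [he₁ t ht]), he₁ t ht]
  · have hpq := hs₁ htop hne
    rw [hpq, hs₂ (hpq ▸ htop) (by rwa [← hpq, he₁ _ hne])]

instance : Std.Refl (@TrajLE X) := ⟨TrajLE.refl⟩

instance : IsTrans (Traj X) TrajLE := ⟨fun _ _ _ => TrajLE.trans⟩

lemma terminates (h : TrajLE p q) {x : X} (hp : Terminates p x) :
    q.1 = p.1 ∧ Terminates q x := by
  have hne : p.2 p.1.toNNReal ≠ none := by simp [hp.2]
  have hd := (h.2.2 hp.1 hne).symm
  exact ⟨hd, hd ▸ hp.1, by rw [hd, h.2.1 _ hne, hp.2]⟩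

end TrajLE

section Chain

variable {X : Type u} {c : ℕ → Traj X}

lemma chain_trajLE (hc : ∀ i, TrajLE (c i) (c (i + 1))) {i j : ℕ} (hij : i ≤ j) :
    TrajLE (c i) (c j) :=
  Nat.rel_of_forall_rel_succ_of_le TrajLE hc hij

lemma chain_snd_eq (hc : ∀ i, TrajLE (c i) (c (i + 1))) {i j : ℕ} {t : ℝ≥0}
    (hi : (c i).2 t ≠ none) (hj : (c j).2 t ≠ none) : (c j).2 t = (c i).2 t := by
  rcases le_total i j with h | h
  · exact (chain_trajLE hc h).2.1 t hi
  · exact ((chain_trajLE hc h).2.1 t hj).symm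

lemma chain_terminates_unique (hc : ∀ i, TrajLE (c i) (c (i + 1))) {i j : ℕ} {x y : X}
    (hi : Terminates (c i) x) (hj : Terminates (c j) y) : (c j).1 = (c i).1 ∧ y = x := by
  rcases le_total i j with h | h
  · obtain ⟨hd, hx⟩ := (chain_trajLE hc h).terminates hi
    exact ⟨hd, Option.some_injective _ (hj.2.symm.trans hx.2)⟩
  · obtain ⟨hd, hy⟩ := (chain_trajLE hc h).terminates hj
    exact ⟨hd.symm, Option.some_injective _ (hy.2.symm.trans hi.2)⟩

lemma chain_fst_le_of_terminates (hc : ∀ i, TrajLE (c i) (c (i + 1))) {i : ℕ} {x : X}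
    (hi : Terminates (c i) x) (j : ℕ) : (c j).1 ≤ (c i).1 := by
  rcases le_total j i with h | h
  · exact (chain_trajLE hc h).1
  · exact ((chain_trajLE hc h).terminates hi).1.le

lemma chain_terminates_or_snd_eq_none (hc : ∀ i, TrajLE (c i) (c (i + 1)))
    (hflat : ∀ i, Flat (c i)) {i : ℕ} {x : X} (hi : Terminates (c i) x) (j : ℕ) :
    (Terminates (c j) x ∧ (c j).1 = (c i).1) ∨
      ((∀ y, ¬Terminates (c j) y) ∧ ∀ t : ℝ≥0, (c i).1 ≤ t → (c j).2 t = none) := by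
  by_cases h : ∃ y, Terminates (c j) y
  · obtain ⟨y, hy⟩ := h
    obtain ⟨hdj, rfl⟩ := chain_terminates_unique hc hi hy
    exact Or.inl ⟨hy, hdj⟩
  · exact Or.inr ⟨not_exists.mp h, fun t ht => (hflat j).snd_eq_none_of_le (not_exists.mp h)
      ((chain_fst_le_of_terminates hc hi j).trans ht)⟩

lemma chainJoin_snd_eq (c : ℕ → Traj X) (t : ℝ≥0) (v : Option X)
    (hdef : ∀ j, (c j).2 t ≠ none → (c j).2 t = v)
    (hv : v ≠ none → ∃ j, (c j).2 t ≠ none) : (chainJoin c).2 t = v := by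
  show (if h : ∃ i, (c i).2 t ≠ none then (c h.choose).2 t else none) = v
  split_ifs with h
  · exact hdef _ h.choose_spec
  · by_contra hne
    exact h (hv (Ne.symm hne))

lemma chainJoin_snd_of_ne_none (hc : ∀ i, TrajLE (c i) (c (i + 1))) {i : ℕ} {t : ℝ≥0}
    (hi : (c i).2 t ≠ none) : (chainJoin c).2 t = (c i).2 t :=
  chainJoin_snd_eq c t _ (fun _ hj => chain_snd_eq hc hi hj) fun _ => ⟨i, hi⟩

lemma exists_snd_ne_none_of_chainJoin {t : ℝ≥0} (h : (chainJoin c).2 t ≠ none) :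
    ∃ i, (c i).2 t ≠ none := by
  by_contra hc
  exact h (dif_neg hc)

lemma chainJoin_snd_bind {Y : Type v} (hc : ∀ i, TrajLE (c i) (c (i + 1))) (g : X → Option Y)
    {c' : ℕ → Traj Y} {t : ℝ≥0} (h : ∀ j, (c' j).2 t = ((c j).2 t).bind g) :
    (chainJoin c').2 t = ((chainJoin c).2 t).bind g := by
  refine chainJoin_snd_eq c' t _ (fun j hj => ?_) fun hv => ?_
  · rw [h j] at hj ⊢
    rw [chainJoin_snd_of_ne_none hc fun h0 => hj (by rw [h0]; rfl)]
  · obtain ⟨k, hk⟩ := exists_snd_ne_none_of_chainJoin fun h0 => hv (by rw [h0]; rfl)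
    exact ⟨k, by rwa [h k, ← chainJoin_snd_of_ne_none hc hk]⟩

lemma chainJoin_terminates (hc : ∀ i, TrajLE (c i) (c (i + 1))) {i : ℕ} {x : X}
    (hi : Terminates (c i) x) : (chainJoin c).1 = (c i).1 ∧ Terminates (chainJoin c) x := by
  have hd : (chainJoin c).1 = (c i).1 :=
    le_antisymm (iSup_le (chain_fst_le_of_terminates hc hi)) (le_iSup (fun j => (c j).1) i)
  refine ⟨hd, hd ▸ hi.1, ?_⟩
  rw [hd, chainJoin_snd_of_ne_none hc (i := i) (by simp [hi.2]), hi.2]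

lemma exists_terminates_of_chainJoin (hflat : ∀ i, Flat (c i)) {x : X}
    (h : Terminates (chainJoin c) x) : ∃ i y, Terminates (c i) y := by
  obtain ⟨k, hk⟩ :=
    exists_snd_ne_none_of_chainJoin (c := c) (t := (chainJoin c).1.toNNReal) (by simp [h.2])
  by_contra! hnt
  refine hk ((hflat k).snd_eq_none_of_le (hnt k) ?_)
  rw [ENNReal.coe_toNNReal h.1]
  exact le_iSup (fun j => (c j).1) k

end Chain

section Continuity

variable {X : Type u} {Y : Type v} (f : X → Traj Y) {c : ℕ → Traj X}

theorem kl_chainJoin_of_terminates (hc : ∀ i, TrajLE (c i) (c (i + 1)))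
    (hflat : ∀ i, Flat (c i)) {i : ℕ} {x : X} (hi : Terminates (c i) x) :
    kl f (chainJoin c) = chainJoin fun j => kl f (c j) := by
  obtain ⟨hd, hjoin⟩ := chainJoin_terminates hc hi
  have hcases := chain_terminates_or_snd_eq_none hc hflat hi
  refine Prod.ext ?_ (funext fun t => ?_)
  · show (kl f (chainJoin c)).1 = ⨆ j, (kl f (c j)).1
    rw [kl_fst_of_terminates f hjoin, hd]
    refine le_antisymm (le_iSup_of_le i (kl_fst_of_terminates f hi).ge) (iSup_le fun j => ?_)
    rcases hcases j with ⟨hj, hdj⟩ | ⟨hj, -⟩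
    · rw [kl_fst_of_terminates f hj, hdj]
    · rw [kl_fst_of_forall_not_terminates f hj]
      exact (chain_fst_le_of_terminates hc hi j).trans le_self_add
  · show (kl f (chainJoin c)).2 t = (chainJoin fun j => kl f (c j)).2 t
    rcases lt_or_ge (t : ℝ≥0∞) (c i).1 with ht | ht
    · rw [kl_snd_of_terminates_of_lt f hjoin (by rwa [hd])]
      refine (chainJoin_snd_bind hc _ fun j => ?_).symm
      rcases hcases j with ⟨hj, hdj⟩ | ⟨hj, -⟩
      · exact kl_snd_of_terminates_of_lt f hj (by rwa [hdj])
      · exact kl_snd_of_forall_not_terminates f hj t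
    · rw [kl_snd_of_terminates_of_le f hjoin (by rwa [hd]), hd]
      refine (chainJoin_snd_eq _ t _ (fun j hj => ?_) fun hv => ⟨i, ?_⟩).symm
      · rcases hcases j with ⟨hj', hdj⟩ | ⟨hj', hnone⟩
        · rw [kl_snd_of_terminates_of_le f hj' (by rwa [hdj]), hdj]
        · rw [kl_snd_of_forall_not_terminates f hj', hnone t ht] at hj
          exact absurd rfl hj
      · rwa [kl_snd_of_terminates_of_le f hi ht]

theorem kl_chainJoin_of_forall_not_terminates (hc : ∀ i, TrajLE (c i) (c (i + 1)))
    (hflat : ∀ i, Flat (c i)) (h : ∀ i y, ¬Terminates (c i) y) :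
    kl f (chainJoin c) = chainJoin fun j => kl f (c j) := by
  have hjoin : ∀ y, ¬Terminates (chainJoin c) y := fun _ hy => by
    obtain ⟨i, z, hz⟩ := exists_terminates_of_chainJoin hflat hy
    exact h i z hz
  refine Prod.ext ?_ (funext fun t => ?_)
  · rw [kl_fst_of_forall_not_terminates f hjoin]
    exact iSup_congr fun j => (kl_fst_of_forall_not_terminates f (h j)).symm
  · rw [kl_snd_of_forall_not_terminates f hjoin]
    exact (chainJoin_snd_bind hc _ fun j => kl_snd_of_forall_not_terminates f (h j) t).symm

end Continuity

theorem kl_continuous_traj_general {X : Type u} {Y : Type v} (f : X → Traj Y)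
    (c : ℕ → Traj X)
    (hflat : ∀ i, Flat (c i)) (hchain : ∀ i, TrajLE (c i) (c (i + 1))) :
    kl f (chainJoin c) = chainJoin fun i => kl f (c i) := by
  by_cases h : ∃ i x, Terminates (c i) x
  · obtain ⟨i, x, hi⟩ := h
    exact kl_chainJoin_of_terminates f hchain hflat hi
  · exact kl_chainJoin_of_forall_not_terminates f hchain hflat fun i x hi => h ⟨i, x, hi⟩

/-- Kleisli composition of `H₀M` is ω-continuous in the trajectory argument. -/
theorem kl_continuous_traj {X : Type u} {Y : Type v} (f : X → Traj Y)
    (hf : ∀ x, Flat (f x)) (c : ℕ → Traj X)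
    (hflat : ∀ i, Flat (c i)) (hchain : ∀ i, TrajLE (c i) (c (i + 1))) :
    kl f (chainJoin c) = chainJoin fun i => kl f (c i) :=
  kl_continuous_traj_general f c hflat hchain
end

section
/- The iterates of a map f : X → H₀M (Y ⊕ X) form an ω-chain: for every n and every x ∈ X, f⁽ⁿ⁾ x ⊑ f⁽ⁿ⁺¹⁾ x. -/
open scoped ENNReal NNReal
open Classical

universe u v w

/-! By induction on `n`: `f⁽⁰⁾ x` is the least element for `⊑`, and the Kleisli lifting is
monotone in the Kleisli arrow, so `f⁽ⁿ⁾ ⊑ f⁽ⁿ⁺¹⁾` pointwise gives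
`[η, f⁽ⁿ⁾]^† ∘ f ⊑ [η, f⁽ⁿ⁺¹⁾]^† ∘ f`. -/

section

variable {X : Type u} {Y : Type v}

theorem TrajLE.refl_s12 (p : Traj X) : TrajLE p p :=
  ⟨le_rfl, fun _ _ => rfl, fun _ _ => rfl⟩

theorem empty_trajLE (p : Traj X) : TrajLE (0, fun _ => none) p :=
  ⟨zero_le, fun _ h => absurd rfl h, fun _ h => absurd rfl h⟩

theorem bind_ev_zero_eq_of_trajLE {g g' : X → Traj Y} (hg : ∀ x, TrajLE (g x) (g' x))
    (o : Option X) (ho : (o.bind fun x => (g x).2 0) ≠ none) :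
    (o.bind fun x => (g' x).2 0) = o.bind fun x => (g x).2 0 := by
  cases o with
  | none => simp at ho
  | some x => exact (hg x).2.1 0 ho

theorem toNNReal_add_sub_toNNReal {a b : ℝ≥0∞} (ha : a ≠ ⊤) (hb : b ≠ ⊤) :
    (a + b).toNNReal - a.toNNReal = b.toNNReal := by
  rw [ENNReal.toNNReal_add ha hb, add_tsub_cancel_left]

theorem kl_mono {g g' : X → Traj Y} (hg : ∀ x, TrajLE (g x) (g' x)) (p : Traj X) :
    TrajLE (kl g p) (kl g' p) := by
  have hbind := bind_ev_zero_eq_of_trajLE hg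
  by_cases htop : p.1 = ⊤
  · simp only [kl, if_pos htop]
    exact ⟨le_rfl, fun t => hbind (p.2 t), fun h => absurd htop h⟩
  simp only [kl, if_neg htop]
  cases p.2 p.1.toNNReal with
  | none => exact ⟨le_rfl, fun t => hbind (p.2 t), fun _ _ => rfl⟩
  | some x =>
    dsimp only
    refine ⟨add_le_add_right (hg x).1 _, fun t ht => ?_, fun hfin hdef => ?_⟩
    · by_cases hlt : (t : ℝ≥0∞) < p.1
      · simp only [if_pos hlt] at ht ⊢
        exact hbind (p.2 t) ht
      · simp only [if_neg hlt] at ht ⊢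
        exact (hg x).2.1 _ ht
    · -- the end point of `kl g p` lies in the `g x` part, whose duration cannot grow
      have hgx : (g x).1 ≠ ⊤ := fun h => hfin (by simp [h])
      have hnlt : ¬ (((p.1 + (g x).1).toNNReal : ℝ≥0) : ℝ≥0∞) < p.1 := by
        rw [ENNReal.coe_toNNReal hfin]
        exact not_lt.2 le_self_add
      simp only [if_neg hnlt, toNNReal_add_sub_toNNReal htop hgx] at hdef
      rw [(hg x).2.2 hgx hdef]

end

theorem iter_chain_general {X Y : Type u} (f : X → Traj (Y ⊕ X))
    (n : ℕ) (x : X) :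
    TrajLE (iter f n x) (iter f (n + 1) x) := by
  induction n generalizing x with
  | zero => exact empty_trajLE _
  | succ n ih =>
    refine kl_mono (fun z => ?_) (f x)
    cases z with
    | inl y => exact TrajLE.refl_s12 _
    | inr x' => exact ih x'

/-- The iterates of `f : X → H₀M (Y ⊕ X)` form an ω-chain. -/
theorem iter_chain {X Y : Type u} (f : X → Traj (Y ⊕ X)) (hf : ∀ x, Flat (f x))
    (n : ℕ) (x : X) :
    TrajLE (iter f n x) (iter f (n + 1) x) :=
  iter_chain_general f n x
end

section
/- Progressive iteration restricts to H₊: if f : X → H₀M (Y ⊕ X) takes all its values in H₊ (Y ⊕ X) and is progressive in X, then for every x ∈ X the iteration f^‡ x = ⊔ₙ f⁽ⁿ⁾ x lies in H₊ Y. -/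
open scoped ENNReal NNReal
open Classical

universe u v w

/-!
The join of a chain is defined at `t` exactly when some approximant is, and flatness passes to
the join pointwise. Progressiveness makes every `f⁽ⁿ⁺¹⁾ x` defined at `0`; hence, by induction,
`f⁽ⁿ⁺¹⁾ x` is defined on `[0, dur f⁽ⁿ⁾ x)`: before `dur (f x)` the Kleisli lifting only reads the
continuation at time `0`, and afterwards it follows the next iterate, shifted by `dur (f x)`.
So the join is defined below its duration, which is the supremum of the `dur f⁽ⁿ⁾ x`.
-/

section Kleisli

variable {X : Type u} {Y : Type v} {g : X → Traj Y} {p : Traj X}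

lemma kl_snd_of_lt {t : ℝ≥0} (ht : (t : ℝ≥0∞) < p.1) :
    (kl g p).2 t = (p.2 t).bind fun x => (g x).2 0 := by
  unfold kl
  split_ifs
  · rfl
  · split <;> simp [ht]

lemma kl_of_coe_none {a : ℝ≥0} (ha : p.1 = a) (hx : p.2 a = none) :
    kl g p = (p.1, fun t => (p.2 t).bind fun x => (g x).2 0) := by
  simp [kl, ha, hx]

lemma kl_of_coe_some {a : ℝ≥0} {x : X} (ha : p.1 = a) (hx : p.2 a = some x) :
    kl g p = ((a : ℝ≥0∞) + (g x).1, fun t : ℝ≥0 =>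
      if (t : ℝ≥0∞) < a then (p.2 t).bind (fun x' => (g x').2 0) else (g x).2 (t - a)) := by
  simp [kl, ha, hx]

lemma kl_snd_zero : (kl g p).2 0 = (p.2 0).bind fun x => (g x).2 0 := by
  rcases eq_zero_or_pos p.1 with hp | hp
  · rcases hx : p.2 0 with _ | x
    · simp [kl_of_coe_none (g := g) (by simpa using hp) hx, hx]
    · simp [kl_of_coe_some (g := g) (by simpa using hp) hx]
  · exact kl_snd_of_lt hp

lemma flat_kl (hg : ∀ x, Flat (g x)) (hp : Flat p) : Flat (kl g p) := by
  intro t ht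
  have hfin : p.1 ≠ ⊤ := fun htop => by simp [kl, htop] at ht
  obtain ⟨a, ha⟩ : ∃ a : ℝ≥0, p.1 = a := ⟨_, (ENNReal.coe_toNNReal hfin).symm⟩
  rcases hx : p.2 a with _ | x
  · rw [kl_of_coe_none ha hx] at ht ⊢
    simp only [hp t ht]
  · rw [kl_of_coe_some ha hx] at ht ⊢
    obtain ⟨b, hb⟩ : ∃ b : ℝ≥0, (g x).1 = b := ⟨_, (ENNReal.coe_toNNReal
      (ne_top_of_le_ne_top ENNReal.coe_ne_top (le_of_add_le_right ht))).symm⟩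
    rw [hb, ← ENNReal.coe_add, ENNReal.coe_le_coe] at ht
    have hat : a ≤ t := le_of_add_le_left ht
    simp only [hb, ← ENNReal.coe_add, ENNReal.toNNReal_coe, ENNReal.coe_lt_coe, not_lt.2 hat,
      not_lt.2 (le_add_right le_rfl : a ≤ a + b), if_false, add_tsub_cancel_left]
    rw [hg x _ (by rw [hb]; exact_mod_cast le_tsub_of_add_le_left ht), hb, ENNReal.toNNReal_coe]

lemma kl_snd_ne_none {g' : X → Traj Y} (hg : ∀ x, (g x).2 0 ≠ none)
    (hgg' : ∀ x (t : ℝ≥0), (t : ℝ≥0∞) < (g' x).1 → (g x).2 t ≠ none)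
    (hp : ∀ t : ℝ≥0, (t : ℝ≥0∞) < p.1 → p.2 t ≠ none)
    {t : ℝ≥0} (ht : (t : ℝ≥0∞) < (kl g' p).1) : (kl g p).2 t ≠ none := by
  by_cases hlt : (t : ℝ≥0∞) < p.1
  · obtain ⟨x, hx⟩ := Option.ne_none_iff_exists'.1 (hp t hlt)
    simpa [kl_snd_of_lt hlt, hx] using hg x
  obtain ⟨a, ha⟩ : ∃ a : ℝ≥0, p.1 = a := ⟨_, (ENNReal.coe_toNNReal
    (ne_top_of_le_ne_top ENNReal.coe_ne_top (not_lt.1 hlt))).symm⟩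
  rw [ha, not_lt] at hlt
  rcases hx : p.2 a with _ | x
  · rw [kl_of_coe_none ha hx, ha] at ht
    exact absurd ht (not_lt.2 hlt)
  · rw [kl_of_coe_some ha hx] at ht
    simp only [kl_of_coe_some ha hx, not_lt.2 hlt, if_false]
    refine hgg' x _ ?_
    rwa [ENNReal.coe_sub, ENNReal.sub_lt_iff_lt_right ENNReal.coe_ne_top hlt, add_comm]

end Kleisli

section ChainJoin

variable {X : Type u} {c : ℕ → Traj X}

lemma chainJoin_snd_ne_none_iff {t : ℝ≥0} :
    (chainJoin c).2 t ≠ none ↔ ∃ i, (c i).2 t ≠ none := by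
  refine ⟨fun h => ?_, fun h => ?_⟩
  · by_contra hnone
    exact h (dif_neg hnone)
  · simpa only [chainJoin, dif_pos h] using h.choose_spec

lemma chainJoin_snd_congr {s t : ℝ≥0} (h : ∀ i, (c i).2 s = (c i).2 t) :
    (chainJoin c).2 s = (chainJoin c).2 t := by
  simp only [chainJoin, h]

lemma flat_chainJoin (hc : ∀ i, Flat (c i)) : Flat (chainJoin c) := by
  intro t ht
  have hfin : (chainJoin c).1 ≠ ⊤ := ne_top_of_le_ne_top ENNReal.coe_ne_top ht
  refine chainJoin_snd_congr fun i => ?_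
  have hi : (c i).1 ≤ (chainJoin c).1 := le_iSup (fun i => (c i).1) i
  rw [hc i t (hi.trans ht), hc i (chainJoin c).1.toNNReal (by rwa [ENNReal.coe_toNNReal hfin])]

lemma memHp_chainJoin (hne : ∃ i t, (c i).2 t ≠ none)
    (hdef : ∀ i (t : ℝ≥0), (t : ℝ≥0∞) < (c i).1 → ∃ j, (c j).2 t ≠ none) :
    memHp (chainJoin c) := by
  refine ⟨fun heq => ?_, fun t ht => ?_⟩
  · obtain ⟨i, t, hit⟩ := hne
    exact chainJoin_snd_ne_none_iff.2 ⟨i, hit⟩ (congrFun heq t)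
  · obtain ⟨i, hi⟩ := lt_iSup_iff.1 ht
    exact chainJoin_snd_ne_none_iff.2 (hdef i t hi)

end ChainJoin

section Iter

variable {X Y : Type u} {f : X → Traj (Y ⊕ X)}

lemma flat_eta {Z : Type*} (z : Z) : Flat (eta z) := fun _ _ => rfl

lemma flat_iter (hf : ∀ x, Flat (f x)) : ∀ n x, Flat (iter f n x)
  | 0, _ => fun _ _ => rfl
  | n + 1, x => flat_kl (Sum.rec flat_eta (flat_iter hf n)) (hf x)

lemma iter_succ_snd_zero {x : X} {y : Y} (hy : (f x).2 0 = some (Sum.inl y)) (n : ℕ) :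
    (iter f (n + 1) x).2 0 = some y := by
  simp [iter, kl_snd_zero, hy, eta]

lemma iter_succ_snd_ne_none (hf : ∀ x, memHp (f x)) (hprog : Prog f) :
    ∀ n x (t : ℝ≥0), (t : ℝ≥0∞) < (iter f n x).1 → (iter f (n + 1) x).2 t ≠ none
  | 0, _, _, ht => absurd ht ENNReal.not_lt_zero
  | n + 1, x, _, ht => by
    refine kl_snd_ne_none (fun z => ?_) (fun z => ?_) (hf x).2 ht
    · rcases z with y | x'
      · simp [eta]
      · obtain ⟨y, hy⟩ := hprog x'
        simp [iter_succ_snd_zero hy]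
    · rcases z with y | x'
      · simp [eta]
      · exact iter_succ_snd_ne_none hf hprog n x'

end Iter

/-- Progressive iteration restricts to `H₊`: if `f` takes values in `H₊ (Y ⊕ X)` and
is progressive in `X`, then `f^‡ x` lies in `H₊ Y` for every `x`. -/
theorem iterStar_mem_Hplus {X Y : Type u} (f : X → Traj (Y ⊕ X))
    (hf : ∀ x, Flat (f x) ∧ memHp (f x)) (hprog : Prog f) (x : X) :
    Flat (iterStar f x) ∧ memHp (iterStar f x) := by
  obtain ⟨y, hy⟩ := hprog x
  refine ⟨flat_chainJoin fun n => flat_iter (fun x => (hf x).1) n x,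
    memHp_chainJoin ⟨1, 0, by simp [iter_succ_snd_zero hy]⟩ fun n t ht => ?_⟩
  exact ⟨n + 1, iter_succ_snd_ne_none (fun x => (hf x).2) hprog n x t ht⟩
end

section
/- For every f : X → H₀M (Y ⊕ X), every x ∈ X, every t ∈ ℝ≥0 and every y ∈ Y: the evolution of the iteration satisfies (f^‡ x).ev t = some y if and only if there exists a natural number n with (f⁽ⁿ⁾ x).ev t = some y. -/
/-!
The iterates form an ω-chain for the order "the evolution of `q` extends that of `p`",
because the Kleisli lifting is monotone in its continuation for this order. In such a
chain any two iterates defined at `t` agree there, so the value the join picks at `t`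
is the value of every iterate defined at `t`.
-/

open scoped ENNReal NNReal
open Classical

universe u v w

def EvExtends {X : Type u} (p q : Traj X) : Prop :=
  ∀ t y, p.2 t = some y → q.2 t = some y

theorem EvExtends.trans {X : Type u} {p q r : Traj X} (hpq : EvExtends p q)
    (hqr : EvExtends q r) : EvExtends p r :=
  fun t y h => hqr t y (hpq t y h)

theorem EvExtends.eq_of_eq_some {X : Type u} {p q : Traj X} (hpq : EvExtends p q) {t : ℝ≥0}
    {y z : X} (hp : p.2 t = some y) (hq : q.2 t = some z) : y = z :=
  Option.some_injective X ((hpq t y hp).symm.trans hq)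

theorem Option.bind_eq_some_mono {α β : Type*} {g g' : α → Option β}
    (hg : ∀ a b, g a = some b → g' a = some b) (o : Option α) (b : β)
    (h : o.bind g = some b) : o.bind g' = some b := by
  obtain ⟨a, rfl, ha⟩ := Option.bind_eq_some_iff.mp h
  exact hg a b ha

theorem kl_evExtends {X : Type u} {Y : Type v} {g g' : X → Traj Y}
    (hg : ∀ x, EvExtends (g x) (g' x)) (p : Traj X) : EvExtends (kl g p) (kl g' p) := by
  have hbind : ∀ t y, ((p.2 t).bind fun x => (g x).2 0) = some y →
      ((p.2 t).bind fun x => (g' x).2 0) = some y :=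
    fun t => Option.bind_eq_some_mono (fun x => hg x 0) (p.2 t)
  intro t y
  unfold kl
  split
  · exact hbind t y
  · rcases p.2 p.1.toNNReal with _ | x
    · exact hbind t y
    · by_cases ht : (t : ℝ≥0∞) < p.1
      · simpa only [ht, if_true] using hbind t y
      · simpa only [ht, if_false] using hg x _ y

theorem iter_evExtends_succ {X Y : Type u} (f : X → Traj (Y ⊕ X)) (n : ℕ) (x : X) :
    EvExtends (iter f n x) (iter f (n + 1) x) := by
  induction n generalizing x with
  | zero => intro t y h; simp [iter] at h
  | succ n ih =>
    refine kl_evExtends ?_ (f x)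
    rintro (y | x')
    · exact fun _ _ => id
    · exact ih x'

theorem iter_evExtends_of_le {X Y : Type u} (f : X → Traj (Y ⊕ X)) {n m : ℕ} (hnm : n ≤ m)
    (x : X) : EvExtends (iter f n x) (iter f m x) := by
  induction m, hnm using Nat.le_induction with
  | base => exact fun _ _ => id
  | succ m _ ih => exact ih.trans (iter_evExtends_succ f m x)

theorem chainJoin_ev_eq_some_iff {X : Type u} {c : ℕ → Traj X}
    (hc : ∀ i j, i ≤ j → EvExtends (c i) (c j)) (t : ℝ≥0) (y : X) :
    (chainJoin c).2 t = some y ↔ ∃ n, (c n).2 t = some y := by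
  simp only [chainJoin]
  constructor
  · intro h
    split at h
    · exact ⟨_, h⟩
    · cases h
  · rintro ⟨n, hn⟩
    have hdef : ∃ i, (c i).2 t ≠ none := ⟨n, by simp [hn]⟩
    rw [dif_pos hdef]
    obtain ⟨z, hz⟩ := Option.ne_none_iff_exists'.mp hdef.choose_spec
    rw [hz]
    rcases le_total hdef.choose n with hle | hle
    · rw [(hc _ _ hle).eq_of_eq_some hz hn]
    · rw [(hc _ _ hle).eq_of_eq_some hn hz]

theorem iterStar_ev_iff_general {X Y : Type u} (f : X → Traj (Y ⊕ X))
    (x : X) (t : ℝ≥0) (y : Y) :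
    (iterStar f x).2 t = some y ↔ ∃ n : ℕ, (iter f n x).2 t = some y :=
  chainJoin_ev_eq_some_iff (fun _ _ hij => iter_evExtends_of_le f hij x) t y

/-- The evolution of the iteration `f^‡` is `some y` at `t` iff some finite iterate
already is `some y` at `t`. -/
theorem iterStar_ev_iff {X Y : Type u} (f : X → Traj (Y ⊕ X))
    (hf : ∀ x, Flat (f x)) (x : X) (t : ℝ≥0) (y : Y) :
    (iterStar f x).2 t = some y ↔ ∃ n : ℕ, (iter f n x).2 t = some y :=
  iterStar_ev_iff_general f x t y
end
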